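/- arXiv:1302.5546 — 2 statements merged into one kernel-verified Lean document; each statement's English description precedes it below -/
import Mathlib

section
/- For every point α in the open unit disc ℂ and every z on the unit circle, the tangential derivative of θ ↦ log|e^{iθ} - α| at z equals the tangential derivative of θ ↦ log|1 - conj(α)·e^{iθ}| at z, and both equal (α ∧ z)/|z - α|², where α ∧ z := Re(α)·Im(z) - Im(α)·Re(z). -/
/-! For `z = e^{iθ}` one has `dz/dθ = iz` and `d/dθ log|f| = ⟪f, f'⟫_ℝ / |f|²`, and
`⟪z - α, iz⟫_ℝ = α ∧ z` because `⟪z, iz⟫_ℝ = 0`. On the unit circle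
`|1 - ᾱz| = |z| |z̄ - ᾱ| = |z - α|`, so the two functions of `θ` coincide. -/

open Complex ComplexConjugate RealInnerProductSpace

theorem HasDerivAt.log_norm {E : Type*} [NormedAddCommGroup E] [InnerProductSpace ℝ E]
    {f : ℝ → E} {f' : E} {x : ℝ} (hf : HasDerivAt f f' x) (hx : f x ≠ 0) :
    HasDerivAt (fun t => Real.log ‖f t‖) (⟪f x, f'⟫ / ‖f x‖ ^ 2) x := by
  have hsq : HasDerivAt (fun t => Real.log (‖f t‖ ^ 2) / 2)
      (2 * ⟪f x, f'⟫ / ‖f x‖ ^ 2 / 2) x :=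
    (hf.norm_sq.log (by positivity)).div_const 2
  convert hsq using 1
  · funext t
    rw [Real.log_pow]
    ring
  · ring

theorem hasDerivAt_exp_ofReal_mul_I (θ : ℝ) :
    HasDerivAt (fun t : ℝ => exp (t * I)) (exp (θ * I) * I) θ := by
  simpa using ((hasDerivAt_id (θ : ℂ)).mul_const I).cexp.comp_ofReal

theorem Complex.inner_sub_mul_I (α z : ℂ) :
    ⟪z - α, z * I⟫ = α.re * z.im - α.im * z.re := by
  simp only [Complex.inner, mul_re, mul_im, sub_re, sub_im, conj_re, conj_im, I_re, I_im]
  ring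

theorem Complex.norm_one_sub_conj_mul (α : ℂ) {z : ℂ} (hz : ‖z‖ = 1) :
    ‖1 - conj α * z‖ = ‖z - α‖ := by
  have h : 1 - conj α * z = z * conj (z - α) := by
    rw [map_sub, mul_sub, mul_conj, normSq_eq_norm_sq, hz]
    push_cast
    ring
  rw [h, norm_mul, hz, norm_conj, one_mul]

/-- For α in the open unit disc and z = e^{iθ₀} on the unit circle, the tangential
derivative of θ ↦ log|e^{iθ} - α| equals that of θ ↦ log|1 - conj(α)e^{iθ}|, and both
equal (α ∧ z)/|z - α|², where α ∧ z = Re α · Im z - Im α · Re z. -/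
theorem stmt_0 (α : ℂ) (hα : ‖α‖ < 1) (θ₀ : ℝ) :
    deriv (fun θ : ℝ => Real.log ‖Complex.exp (θ * Complex.I) - α‖) θ₀
      = (α.re * (Complex.exp (θ₀ * Complex.I)).im - α.im * (Complex.exp (θ₀ * Complex.I)).re)
        / ‖Complex.exp (θ₀ * Complex.I) - α‖ ^ 2 ∧
    deriv (fun θ : ℝ =>
        Real.log ‖1 - (starRingEnd ℂ) α * Complex.exp (θ * Complex.I)‖) θ₀
      = (α.re * (Complex.exp (θ₀ * Complex.I)).im - α.im * (Complex.exp (θ₀ * Complex.I)).re)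
        / ‖Complex.exp (θ₀ * Complex.I) - α‖ ^ 2 := by
  have hzα : exp (θ₀ * I) - α ≠ 0 := fun h => by
    rw [sub_eq_zero] at h
    rw [← h, norm_exp_ofReal_mul_I] at hα
    exact lt_irrefl 1 hα
  have hfirst := (HasDerivAt.log_norm ((hasDerivAt_exp_ofReal_mul_I θ₀).sub_const α) hzα).deriv
  rw [inner_sub_mul_I] at hfirst
  have hsame : (fun θ : ℝ => Real.log ‖1 - conj α * exp (θ * I)‖)
      = fun θ : ℝ => Real.log ‖exp (θ * I) - α‖ :=
    funext fun θ => by rw [norm_one_sub_conj_mul α (norm_exp_ofReal_mul_I θ)]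
  exact ⟨hfirst, hsame ▸ hfirst⟩
end

section
/- For every α in the open unit disc and every z on the unit circle, the radial (normal) derivative at z of the function w ↦ log|1 - conj(α)·w| + log|w - α| equals 1; that is, (d/dr)|_{r=1} [ log|1 - conj(α)·(r z)| + log|r z - α| ] = 1. -/
/-!
Along a nonvanishing path `g`, the derivative of `log ‖g‖` is `Re (g' / g)`. With
`w = 1 - conj α * z` and `‖z‖ = 1` one has `z - α = z * conj w`, so the two logarithmic
derivatives at `r = 1` are `-conj α * z / w` and `1 / conj w`; their real parts add up to
`Re ((1 - conj α * z) / w) = 1`.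
-/

open Complex ComplexConjugate

theorem HasDerivAt.log_norm_s1 {g : ℝ → ℂ} {g' : ℂ} {x : ℝ} (hg : HasDerivAt g g' x)
    (hx : g x ≠ 0) : HasDerivAt (fun r => Real.log ‖g r‖) (g' / g x).re x := by
  have hsq := (hg.norm_sq.log (by positivity)).div_const 2
  have hlog : (fun r => Real.log (‖g r‖ ^ 2) / 2) = fun r => Real.log ‖g r‖ := by
    funext r
    rw [Real.log_pow]
    ring
  rw [hlog] at hsq
  refine hsq.congr_deriv ?_
  have hnormSq : normSq (g x) ≠ 0 := by simpa using hx
  rw [Complex.inner, ← normSq_eq_norm_sq, div_re]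
  simp only [mul_re, conj_re, conj_im]
  field_simp
  ring

theorem re_neg_div_add_div_sub_eq_one {α z : ℂ} (hz : ‖z‖ = 1) (hw : 1 - conj α * z ≠ 0) :
    (-(conj α * z) / (1 - conj α * z) + z / (z - α)).re = 1 := by
  have hzz : z * conj z = 1 := by
    rw [mul_conj, normSq_eq_norm_sq, hz]
    norm_num
  have hsub : z - α = z * conj (1 - conj α * z) := by
    simp only [map_sub, map_one, map_mul, conj_conj]
    linear_combination α * hzz
  have hz0 : z ≠ 0 := by
    rintro rfl
    simp at hz
  rw [hsub, div_mul_cancel_left₀ hz0, ← map_inv₀, add_re, conj_re, ← add_re, div_eq_mul_inv,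
    ← add_one_mul, neg_add_eq_sub, mul_inv_cancel₀ hw, one_re]

/-- For α in the open unit disc and z on the unit circle, the radial derivative at r = 1
of r ↦ log|1 - conj(α)(rz)| + log|rz - α| equals 1. -/
theorem stmt_1 (α z : ℂ) (hα : ‖α‖ < 1) (hz : ‖z‖ = 1) :
    deriv (fun r : ℝ => Real.log ‖1 - (starRingEnd ℂ) α * ((r : ℂ) * z)‖
      + Real.log ‖(r : ℂ) * z - α‖) 1 = 1 := by
  have hw : 1 - conj α * z ≠ 0 := by
    refine sub_ne_zero.2 fun h => hα.ne' ?_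
    simpa [hz] using congrArg norm h
  have hzα : z - α ≠ 0 := by
    refine sub_ne_zero.2 fun h => hα.ne ?_
    rwa [h] at hz
  have hr : HasDerivAt (fun r : ℝ => (r : ℂ) * z) z 1 := by
    simpa using (hasDerivAt_id (1 : ℝ)).ofReal_comp.mul_const z
  have h₁ := ((hr.const_mul (conj α)).const_sub 1).log_norm_s1 (by simpa using hw)
  have h₂ := (hr.sub_const α).log_norm_s1 (by simpa using hzα)
  refine (h₁.add h₂).deriv.trans ?_
  rw [← add_re, ofReal_one, one_mul]
  exact re_neg_div_add_div_sub_eq_one hz hw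
end
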